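/- For any letters a, b ∈ A: Σ(1/(1−λab)) = (1/(1−λab)) * Σ(1/(1−λ(a⋄b))), as an identity in k⟨A⟩[[λ]], where ab denotes the two-letter word, a⋄b ∈ kA, Σ := Ψ_{t/(1−t)} is applied coefficientwise, 1/(1−u) = Σ_{n≥0} uⁿ with concatenation powers, and * is extended coefficientwise. -/

import Mathlib

/-!
Setting (Hoffman–Ihara, "Quasi-shuffle products revisited"):
`k` is a field containing `ℚ`, `A` a countable set of letters, `kA` the `k`-vector space
with basis `A` equipped with an associative commutative bilinear product `⋄` (given below as
a bilinear map `d`), and `k⟨A⟩` the noncommutative polynomial algebra on `A`, realized as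
the monoid algebra of the free monoid of words on `A`.
-/

noncomputable section

open scoped BigOperators TensorProduct

section QuasiShuffle

variable (k A : Type*) [Field k] [CharZero k] [Countable A]

/-- `k⟨A⟩`, the noncommutative polynomial algebra on `A`: the `k`-vector space with basis
the words in `A`, with concatenation product and unit the empty word. -/
abbrev KAlg : Type _ := MonoidAlgebra k (FreeMonoid A)

/-- `kA`, the `k`-vector space with basis `A`. -/
abbrev KA : Type _ := A →₀ k

variable {k A}

/-- The basis element of `k⟨A⟩` corresponding to a word. -/
def word (w : List A) : KAlg k A := MonoidAlgebra.of k (FreeMonoid A) (FreeMonoid.ofList w)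

/-- Linear extension to `k⟨A⟩` of a function defined on words. -/
def liftW {N : Type*} [AddCommMonoid N] [Module k N] (g : List A → N) :
    KAlg k A →ₗ[k] N :=
  (Finsupp.lsum k fun w => LinearMap.toSpanSingleton k N (g (FreeMonoid.toList w))) ∘ₗ
    (MonoidAlgebra.coeffLinearEquiv k).toLinearMap

/-- The inclusion of `kA` into `k⟨A⟩` (letters as one-letter words). -/
def incl : KA k A →ₗ[k] KAlg k A :=
  Finsupp.lsum k fun a => LinearMap.toSpanSingleton k (KAlg k A) (word [a])

/-- The `⋄`-product (via the bilinear map `d` on `kA`) of the letters of a word, as an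
element of `kA`; `0` for the empty word. -/
def dChunk (d : KA k A →ₗ[k] KA k A →ₗ[k] KA k A) : List A → KA k A
  | [] => 0
  | a :: t => t.foldl (fun x b => d x (Finsupp.single b 1)) (Finsupp.single a 1)

/-- `I[w]`: for a composition `I` of the length of the word `w`, the concatenation product
of the `⋄`-products of the blocks of `w` determined by `I`. -/
def IW (d : KA k A →ₗ[k] KA k A →ₗ[k] KA k A) (w : List A) (I : Composition w.length) :
    KAlg k A :=
  ((w.splitWrtComposition I).map fun ch => incl (dChunk d ch)).prod

/-- The linear map `Ψ_f` on `k⟨A⟩` associated to a power series `f = Σ_{n≥1} c_n tⁿ`,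
where `c : ℕ → k` records the coefficients:
`Ψ_f(w) = Σ_{I composition of ℓ(w)} c_{i₁} ⋯ c_{i_m} I[w]`. -/
def Psi (d : KA k A →ₗ[k] KA k A →ₗ[k] KA k A) (c : ℕ → k) : KAlg k A →ₗ[k] KAlg k A :=
  liftW fun w => ∑ I : Composition w.length, (I.blocks.map c).prod • IW d w I

/-- Coefficients of the power series `t/(1-t) = t + t² + t³ + ⋯`. -/
def cSig (k : Type*) [Field k] : ℕ → k := fun n => if n = 0 then 0 else 1

variable (k A) in
/-- `k⟨A⟩[[λ]]`: formal power series in a formal parameter `λ` with coefficients in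
`k⟨A⟩`; its ring product is coefficientwise convolution with respect to the
concatenation product. -/
abbrev KSer : Type _ := PowerSeries (KAlg k A)

/-- Multiplication by the formal parameter `λ` on `k⟨A⟩[[λ]]`. -/
def lamS (F : KSer k A) : KSer k A :=
  PowerSeries.mk fun n => if n = 0 then 0 else PowerSeries.coeff (R := KAlg k A) (n - 1) F

/-- Coefficientwise scalar multiplication by an element of `k` on `k⟨A⟩[[λ]]`. -/
def smulS (r : k) (F : KSer k A) : KSer k A :=
  PowerSeries.mk fun n => r • PowerSeries.coeff (R := KAlg k A) n F

/-- `1/(1-u) = Σ_{n≥0} uⁿ` with concatenation powers (each coefficient is a finite sum,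
since in all uses `u` has zero constant term). -/
def geomS (F : KSer k A) : KSer k A :=
  PowerSeries.mk fun n => ∑ i ∈ Finset.range (n + 1), PowerSeries.coeff (R := KAlg k A) n (F ^ i)

/-- Apply a linear map on `k⟨A⟩` coefficientwise to an element of `k⟨A⟩[[λ]]`. -/
def mapS (L : KAlg k A →ₗ[k] KAlg k A) (F : KSer k A) : KSer k A :=
  PowerSeries.mk fun n => L (PowerSeries.coeff (R := KAlg k A) n F)

/-- The coefficientwise extension to `k⟨A⟩[[λ]]` of a bilinear product on `k⟨A⟩`. -/
def mul2S (m : KAlg k A →ₗ[k] KAlg k A →ₗ[k] KAlg k A) (F G : KSer k A) : KSer k A :=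
  PowerSeries.mk fun n => ∑ i ∈ Finset.range (n + 1),
    m (PowerSeries.coeff (R := KAlg k A) i F) (PowerSeries.coeff (R := KAlg k A) (n - i) G)

/-- Powers of a series under (the coefficientwise extension of) a bilinear product `m`
on `k⟨A⟩` (such as `*`, `⋆` or `⋄`), with `0`-th power `1`. -/
def powS (m : KAlg k A →ₗ[k] KAlg k A →ₗ[k] KAlg k A) (F : KSer k A) : ℕ → KSer k A
  | 0 => 1
  | n + 1 => mul2S m F (powS m F n)

/-- An element `z ∈ kA[[λ]]`, given by its coefficients `z : ℕ → kA`, viewed in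
`k⟨A⟩[[λ]]`. -/
def zSer (z : ℕ → KA k A) : KSer k A :=
  PowerSeries.mk fun n => incl (z n)

set_option linter.unusedSectionVars false

section Basic

variable {k A : Type*} [Field k] [CharZero k] [Countable A]

theorem word_nil : (word ([] : List A) : KAlg k A) = 1 :=
  map_one (MonoidAlgebra.of k (FreeMonoid A))

theorem word_mul (l₁ l₂ : List A) :
    (word l₁ : KAlg k A) * word l₂ = word (l₁ ++ l₂) := by
  simp [word, ← map_mul]

theorem liftW_word {N : Type*} [AddCommMonoid N] [Module k N] (g : List A → N) (w : List A) :
    liftW g (word w : KAlg k A) = g w := by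
  simp [liftW, word, MonoidAlgebra.of_apply, MonoidAlgebra.coeffLinearEquiv]

theorem incl_single (c : A) (r : k) :
    (incl (Finsupp.single c r) : KAlg k A) = r • word [c] := by
  rw [incl, Finsupp.lsum_single, LinearMap.toSpanSingleton_apply]

theorem incl_single_one (c : A) :
    (incl (Finsupp.single c (1:k)) : KAlg k A) = word [c] := by
  simp [incl_single]

theorem Psi_word (d : KA k A →ₗ[k] KA k A →ₗ[k] KA k A) (c : ℕ → k) (w : List A) :
    Psi d c (word w) = ∑ I : Composition w.length, (I.blocks.map c).prod • IW d w I := by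
  simp [Psi, liftW_word]

end Basic
section Comp

theorem list_cons_headI_tail {l : List ℕ} (h : l ≠ []) : l.headI :: l.tail = l := by
  cases l with
  | nil => exact absurd rfl h
  | cons a t => rfl

theorem Composition.blocks_ne_nil {m : ℕ} (J : Composition (m+1)) : J.blocks ≠ [] := by
  intro h
  have := J.blocks_sum
  rw [h] at this
  simp at this

theorem Composition.headI_pos {m : ℕ} (J : Composition (m+1)) : 0 < J.blocks.headI := by
  apply J.blocks_pos
  rcases hl : J.blocks with _ | ⟨x, t⟩
  · exact absurd hl J.blocks_ne_nil
  · simp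

theorem Composition.headI_tail_sum {m : ℕ} (J : Composition (m+1)) :
    J.blocks.headI + J.blocks.tail.sum = m + 1 := by
  conv_rhs => rw [← J.blocks_sum, ← list_cons_headI_tail J.blocks_ne_nil]
  simp

/-- prepend a block of size 1 -/
def consOne {m : ℕ} (J : Composition m) : Composition (m+1) where
  blocks := 1 :: J.blocks
  blocks_pos := by
    intro i hi
    rcases List.mem_cons.1 hi with h | h
    · omega
    · exact J.blocks_pos h
  blocks_sum := by simp [J.blocks_sum]; omega

/-- increase the first block by 1 -/
def succHead {m : ℕ} (J : Composition (m+1)) : Composition (m+2) where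
  blocks := (J.blocks.headI + 1) :: J.blocks.tail
  blocks_pos := by
    intro i hi
    rcases List.mem_cons.1 hi with h | h
    · omega
    · exact J.blocks_pos (List.mem_of_mem_tail h)
  blocks_sum := by
    have := J.headI_tail_sum
    simp only [List.sum_cons]
    omega

@[simp] theorem consOne_blocks {m : ℕ} (J : Composition m) :
    (consOne J).blocks = 1 :: J.blocks := rfl

@[simp] theorem succHead_blocks {m : ℕ} (J : Composition (m+1)) :
    (succHead J).blocks = (J.blocks.headI + 1) :: J.blocks.tail := rfl

theorem comp_split_bijective (m : ℕ) :
    Function.Bijective (fun p : Bool × Composition (m+1) =>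
      cond p.1 (consOne p.2) (succHead p.2)) := by
  constructor
  · rintro ⟨b₁, J₁⟩ ⟨b₂, J₂⟩ h
    cases b₁ <;> cases b₂ <;>
      simp only [Bool.cond_true, Bool.cond_false] at h <;>
      have h' := congrArg Composition.blocks h
    · -- both succHead
      have hblk : J₁.blocks = J₂.blocks := by
        simp only [succHead_blocks, List.cons.injEq] at h'
        rw [← list_cons_headI_tail J₁.blocks_ne_nil, ← list_cons_headI_tail J₂.blocks_ne_nil,
          h'.2]
        congr 1
        omega
      rw [Composition.ext hblk]
    · simp only [succHead_blocks, consOne_blocks, List.cons.injEq] at h'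
      have := J₁.headI_pos
      omega
    · simp only [succHead_blocks, consOne_blocks, List.cons.injEq] at h'
      have := J₂.headI_pos
      omega
    · have hblk : J₁.blocks = J₂.blocks := by
        simpa using h'
      rw [Composition.ext hblk]
  · intro I
    obtain ⟨h, t, hbl⟩ : ∃ h t, I.blocks = h :: t := by
      rcases hl : I.blocks with _ | ⟨h, t⟩
      · exact absurd hl I.blocks_ne_nil
      · exact ⟨h, t, rfl⟩
    have hpos : 0 < h := I.blocks_pos (by rw [hbl]; exact List.mem_cons_self)
    have hsum : h + t.sum = m + 2 := by
      have := I.blocks_sum; rw [hbl] at this; simpa using this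
    by_cases h1 : h = 1
    · refine ⟨⟨true, ⟨t, ?_, ?_⟩⟩, ?_⟩
      · intro i hi; exact I.blocks_pos (by rw [hbl]; exact List.mem_cons_of_mem _ hi)
      · omega
      · apply Composition.ext
        simp [consOne_blocks, hbl, h1]
    · refine ⟨⟨false, ⟨(h-1) :: t, ?_, ?_⟩⟩, ?_⟩
      · intro i hi
        rcases List.mem_cons.1 hi with h' | h'
        · omega
        · exact I.blocks_pos (by rw [hbl]; exact List.mem_cons_of_mem _ h')
      · simp; omega
      · apply Composition.ext
        simp only [Bool.cond_false, succHead_blocks]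
        rw [hbl]
        simp only [List.headI_cons, List.tail_cons, List.cons.injEq]
        exact ⟨by omega, trivial⟩

theorem comp_sum_split {M : Type*} [AddCommMonoid M] (m : ℕ) (f : Composition (m+2) → M) :
    ∑ I : Composition (m+2), f I =
      ∑ J : Composition (m+1), f (consOne J) + ∑ J : Composition (m+1), f (succHead J) := by
  rw [← Fintype.sum_bijective _ (comp_split_bijective m) _ f (fun p => rfl)]
  rw [Fintype.sum_prod_type, Fintype.sum_bool]; simp

end Comp
section Core

variable {k A : Type*} [Field k] [CharZero k] [Countable A]
variable (d : KA k A →ₗ[k] KA k A →ₗ[k] KA k A)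

/-- `IW` with explicit block list. -/
def IWb (bs : List ℕ) (l : List A) : KAlg k A :=
  ((List.splitWrtCompositionAux l bs).map fun ch => incl (dChunk d ch)).prod

theorem IW_eq_IWb (w : List A) (I : Composition w.length) :
    IW d w I = IWb d I.blocks w := rfl

@[simp] theorem IWb_nil (l : List A) : IWb d [] l = 1 := by
  simp [IWb, List.splitWrtCompositionAux]

theorem IWb_cons (n : ℕ) (ns : List ℕ) (l : List A) :
    IWb d (n :: ns) l = incl (dChunk d (l.take n)) * IWb d ns (l.drop n) := by
  simp [IWb, List.splitWrtCompositionAux]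

/-- iterated `⋄` with a given starting element, as a linear map -/
def dFoldL : List A → (KA k A →ₗ[k] KA k A)
  | [] => LinearMap.id
  | c :: t => (dFoldL t).comp (d.flip (Finsupp.single c 1))

@[simp] theorem dFoldL_nil (x : KA k A) : dFoldL d [] x = x := rfl

@[simp] theorem dFoldL_cons (c : A) (t : List A) (x : KA k A) :
    dFoldL d (c :: t) x = dFoldL d t (d x (Finsupp.single c 1)) := rfl

theorem foldl_eq_dFoldL (t : List A) (x : KA k A) :
    t.foldl (fun y c => d y (Finsupp.single c 1)) x = dFoldL d t x := by
  induction t generalizing x with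
  | nil => rfl
  | cons c t ih => simp [List.foldl_cons, ih]

theorem dChunk_cons (c : A) (t : List A) :
    dChunk d (c :: t) = dFoldL d t (Finsupp.single c 1) := by
  simp [dChunk, foldl_eq_dFoldL]

theorem cSig_blocks_prod {n : ℕ} (I : Composition n) :
    ((I.blocks.map (cSig k)).prod : k) = 1 := by
  apply List.prod_eq_one
  intro x hx
  rcases List.mem_map.1 hx with ⟨i, hi, rfl⟩
  have := I.blocks_pos hi
  simp [cSig]
  omega

theorem Sig_word (w : List A) :
    Psi d (cSig k) (word w) = ∑ I : Composition w.length, IW d w I := by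
  rw [Psi_word]
  exact Finset.sum_congr rfl fun I _ => by rw [cSig_blocks_prod, one_smul]

instance : Unique (Composition 0) where
  default := Composition.ones 0
  uniq := by
    intro I
    apply Composition.ext
    rcases hl : I.blocks with _ | ⟨x, t⟩
    · simp [Composition.ones]
    · exfalso
      have h1 := I.blocks_sum
      have h2 := I.blocks_pos (by rw [hl]; exact List.mem_cons_self)
      rw [hl] at h1
      simp at h1
      omega

instance : Unique (Composition 1) where
  default := Composition.ones 1
  uniq := by
    intro I
    apply Composition.ext
    have h1 := I.blocks_sum
    have hne : I.blocks ≠ [] := I.blocks_ne_nil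
    rcases hl : I.blocks with _ | ⟨x, t⟩
    · exact absurd hl hne
    · rw [hl] at h1
      simp only [List.sum_cons] at h1
      have hx := I.blocks_pos (by rw [hl]; exact List.mem_cons_self)
      have hx1 : x = 1 := by
        rcases t with _ | ⟨y, t'⟩
        · simp at h1; omega
        · have hy := I.blocks_pos (by rw [hl]; exact List.mem_cons_of_mem _ (List.mem_cons_self))
          simp [List.sum_cons] at h1
          omega
      have ht : t = [] := by
        rcases t with _ | ⟨y, t'⟩
        · rfl
        · exfalso
          have hy := I.blocks_pos (by rw [hl]; exact List.mem_cons_of_mem _ (List.mem_cons_self))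
          simp [List.sum_cons] at h1
          omega
      simp [Composition.ones, hl, hx1, ht]

theorem comp0_blocks (I : Composition 0) : I.blocks = [] := by
  have h1 := I.blocks_sum
  rcases hl : I.blocks with _ | ⟨x, t⟩
  · rfl
  · exfalso
    have h2 := I.blocks_pos (by rw [hl]; exact List.mem_cons_self)
    rw [hl] at h1; simp at h1; omega

theorem comp1_blocks (I : Composition 1) : I.blocks = [1] := by
  have : I = default := Unique.uniq _ I
  rw [this]
  show (Composition.ones 1).blocks = [1]
  simp [Composition.ones]

theorem Psi_one (c : ℕ → k) : Psi d c (1 : KAlg k A) = 1 := by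
  rw [← word_nil, Psi_word]
  haveI : Unique (Composition ([] : List A).length) := inferInstanceAs (Unique (Composition 0))
  rw [Fintype.sum_unique]
  rw [IW_eq_IWb, comp0_blocks]
  simp [word_nil]

theorem Sig_single (c : A) : Psi d (cSig k) (word [c]) = word [c] := by
  rw [Sig_word]
  haveI : Unique (Composition ([c] : List A).length) := inferInstanceAs (Unique (Composition 1))
  rw [Fintype.sum_unique]
  rw [IW_eq_IWb, comp1_blocks, IWb_cons]
  simp [dChunk, incl_single_one]

end Core
section Rec

variable {k A : Type*} [Field k] [CharZero k] [Countable A]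
variable (d : KA k A →ₗ[k] KA k A →ₗ[k] KA k A)

theorem incl_apply (x : KA k A) : (incl x : KAlg k A) = x.sum fun c r => r • word [c] := by
  simp [incl, Finsupp.lsum_apply, LinearMap.toSpanSingleton_apply]
  rfl

theorem incl_mul_word (x : KA k A) (w : List A) :
    (incl x : KAlg k A) * word w = x.sum fun c r => r • word (c :: w) := by
  rw [incl_apply, Finsupp.sum, Finsupp.sum, Finset.sum_mul]
  refine Finset.sum_congr rfl fun c _ => ?_
  rw [smul_mul_assoc, word_mul]
  rfl

/-- The per-composition linear factorization of `IW` on a word with one extra head letter. -/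
theorem IW_cons_eq (w : List A) (J : Composition (w.length + 1)) (c : A) :
    IW d (c :: w) J =
      incl (dFoldL d (w.take (J.blocks.headI - 1)) (Finsupp.single c 1)) *
        IWb d J.blocks.tail (w.drop (J.blocks.headI - 1)) := by
  obtain ⟨h', hh⟩ : ∃ h', J.blocks.headI = h' + 1 := ⟨J.blocks.headI - 1, by
    have := J.headI_pos; omega⟩
  rw [IW_eq_IWb]
  conv_lhs => rw [← list_cons_headI_tail J.blocks_ne_nil]
  rw [IWb_cons, hh]
  simp only [List.take_succ_cons, List.drop_succ_cons, Nat.add_sub_cancel]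
  rw [dChunk_cons]

theorem IW_succHead_eq (w : List A) (J : Composition (w.length + 1)) (c b : A) :
    IW d (c :: b :: w) (succHead J) =
      incl (dFoldL d (w.take (J.blocks.headI - 1))
          (d (Finsupp.single c 1) (Finsupp.single b 1))) *
        IWb d J.blocks.tail (w.drop (J.blocks.headI - 1)) := by
  obtain ⟨h', hh⟩ : ∃ h', J.blocks.headI = h' + 1 := ⟨J.blocks.headI - 1, by
    have := J.headI_pos; omega⟩
  rw [IW_eq_IWb]
  simp only [succHead_blocks]
  rw [IWb_cons, hh]
  simp only [List.take_succ_cons, List.drop_succ_cons, Nat.add_sub_cancel]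
  rw [dChunk_cons]
  simp only [dFoldL_cons]

/-- Key recursion: `Σ(c b w) = c · Σ(b w) + Σ((c⋄b) w)`. -/
theorem Sig_cons_cons (c b : A) (w : List A) :
    Psi d (cSig k) (word (c :: b :: w)) =
      word [c] * Psi d (cSig k) (word (b :: w)) +
        Psi d (cSig k) (incl (d (Finsupp.single c 1) (Finsupp.single b 1)) * word w) := by
  -- linear maps indexed by compositions
  set L : Composition (w.length + 1) → (KA k A →ₗ[k] KAlg k A) := fun J =>
    (LinearMap.mulRight k (IWb d J.blocks.tail (w.drop (J.blocks.headI - 1)))).comp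
      ((incl).comp (dFoldL d (w.take (J.blocks.headI - 1)))) with hL
  have hword : ∀ (c' : A), Psi d (cSig k) (word (c' :: w)) =
      ∑ J : Composition (w.length + 1), L J (Finsupp.single c' 1) := by
    intro c'
    rw [Sig_word]
    refine Finset.sum_congr rfl fun J _ => ?_
    rw [IW_cons_eq]
    rfl
  have hPsiIncl : ∀ (x : KA k A), Psi d (cSig k) (incl x * word w) =
      ∑ J : Composition (w.length + 1), L J x := by
    intro x
    rw [incl_mul_word, map_finsuppSum, Finsupp.sum]
    rw [show (∑ J : Composition (w.length+1), L J x)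
        = ∑ J : Composition (w.length+1), ∑ c' ∈ x.support, x c' • L J (Finsupp.single c' 1) from
      Finset.sum_congr rfl fun J _ => by
        conv_lhs => rw [← Finsupp.sum_single x, Finsupp.sum, map_sum]
        refine Finset.sum_congr rfl fun c' _ => ?_
        rw [← map_smul]
        congr 1
        rw [Finsupp.smul_single, smul_eq_mul, mul_one]]
    rw [Finset.sum_comm]
    refine Finset.sum_congr rfl fun c' _ => ?_
    rw [map_smul, hword c', Finset.smul_sum]
  -- now the main split
  rw [Sig_word]
  have hsplit := comp_sum_split (M := KAlg k A) w.length (fun I => IW d (c :: b :: w) I)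
  rw [show (∑ I : Composition (c :: b :: w).length, IW d (c :: b :: w) I)
      = ∑ I : Composition (w.length + 2), IW d (c :: b :: w) I from rfl]
  rw [hsplit]
  congr 1
  · -- consOne part
    rw [Sig_word (d := d) (w := b :: w), Finset.mul_sum]
    refine Finset.sum_congr rfl fun J _ => ?_
    rw [IW_eq_IWb, consOne_blocks, IWb_cons]
    simp only [List.take_cons, List.take_zero, List.drop_succ_cons, List.drop_zero]
    rw [show dChunk d (List.take 1 (c :: b :: w)) = Finsupp.single c 1 from by
      simp [dChunk]]
    rw [incl_single_one, IW_eq_IWb]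
  · -- succHead part
    rw [hPsiIncl]
    refine Finset.sum_congr rfl fun J _ => ?_
    rw [IW_succHead_eq]
    rfl

end Rec
section RecLin

variable {k A : Type*} [Field k] [CharZero k] [Countable A]
variable (d : KA k A →ₗ[k] KA k A →ₗ[k] KA k A)

theorem single_eq_smul (c : A) (r : k) :
    Finsupp.single c r = r • Finsupp.single c (1:k) := by
  rw [Finsupp.smul_single, smul_eq_mul, mul_one]

theorem Psi_incl (x : KA k A) : Psi d (cSig k) (incl x) = incl x := by
  induction x using Finsupp.induction_linear with
  | zero => simp
  | add f g hf hg => simp only [map_add, hf, hg]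
  | single c r =>
    rw [incl_single, map_smul, Sig_single]

theorem r1W_single (x : KA k A) (b' : A) (w : List A) :
    Psi d (cSig k) (incl x * word (b' :: w)) =
      incl x * Psi d (cSig k) (word (b' :: w)) +
        Psi d (cSig k) (incl (d x (Finsupp.single b' 1)) * word w) := by
  induction x using Finsupp.induction_linear with
  | zero => simp
  | add f g hf hg =>
    simp only [map_add, LinearMap.add_apply, add_mul]
    rw [hf, hg]
    abel
  | single c r =>
    rw [single_eq_smul]
    simp only [map_smul, LinearMap.smul_apply, smul_mul_assoc, ← smul_add]
    congr 1
    rw [incl_single_one, word_mul]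
    exact Sig_cons_cons d c b' w

theorem r1W_word (x y : KA k A) (w : List A) :
    Psi d (cSig k) (incl x * (incl y * word w)) =
      incl x * Psi d (cSig k) (incl y * word w) +
        Psi d (cSig k) (incl (d x y) * word w) := by
  induction y using Finsupp.induction_linear with
  | zero => simp
  | add f g hf hg =>
    simp only [map_add, add_mul, mul_add]
    rw [hf, hg]
    abel
  | single b' s =>
    rw [single_eq_smul]
    simp only [map_smul, smul_mul_assoc, mul_smul_comm, ← smul_add]
    congr 1
    rw [incl_single_one, word_mul]
    exact r1W_single d x b' w

theorem word_toList (g : FreeMonoid A) :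
    (MonoidAlgebra.single g (1:k) : KAlg k A) = word (FreeMonoid.toList g) := by
  simp [word, MonoidAlgebra.of_apply]

theorem r1W (x y : KA k A) (W : KAlg k A) :
    Psi d (cSig k) (incl x * (incl y * W)) =
      incl x * Psi d (cSig k) (incl y * W) +
        Psi d (cSig k) (incl (d x y) * W) := by
  induction W using MonoidAlgebra.induction_linear with
  | zero => simp
  | add f g hf hg =>
    simp only [mul_add, map_add]
    rw [hf, hg]
    abel
  | single g r =>
    have hg : (MonoidAlgebra.single g r : KAlg k A) = r • word (FreeMonoid.toList g) := by
      rw [← word_toList, MonoidAlgebra.smul_single', mul_one]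
    rw [hg]
    simp only [map_smul, mul_smul_comm, ← smul_add]
    congr 1
    exact r1W_word d x y (FreeMonoid.toList g)

end RecLin
section MS

variable {k A : Type*} [Field k] [CharZero k] [Countable A]
variable (d : KA k A →ₗ[k] KA k A →ₗ[k] KA k A)
variable (mS : KAlg k A →ₗ[k] KAlg k A →ₗ[k] KAlg k A)
variable (hS_rec : ∀ (a b : A) (w v : List A),
      mS (word (a :: w)) (word (b :: v)) =
        word [a] * mS (word w) (word (b :: v)) + word [b] * mS (word (a :: w)) (word v) +
          incl (d (Finsupp.single a 1) (Finsupp.single b 1)) * mS (word w) (word v))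

include hS_rec

theorem ms1 (a' b' : A) (w v : List A) :
    mS (incl (Finsupp.single a' (1:k)) * word w) (incl (Finsupp.single b' (1:k)) * word v) =
      incl (Finsupp.single a' (1:k)) * mS (word w) (incl (Finsupp.single b' (1:k)) * word v) +
      incl (Finsupp.single b' (1:k)) * mS (incl (Finsupp.single a' (1:k)) * word w) (word v) +
      incl (d (Finsupp.single a' 1) (Finsupp.single b' 1)) * mS (word w) (word v) := by
  rw [incl_single_one, incl_single_one, word_mul, word_mul]
  exact hS_rec a' b' w v

theorem ms2 (x : KA k A) (b' : A) (w v : List A) :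
    mS (incl x * word w) (incl (Finsupp.single b' (1:k)) * word v) =
      incl x * mS (word w) (incl (Finsupp.single b' (1:k)) * word v) +
      incl (Finsupp.single b' (1:k)) * mS (incl x * word w) (word v) +
      incl (d x (Finsupp.single b' 1)) * mS (word w) (word v) := by
  induction x using Finsupp.induction_linear with
  | zero => simp
  | add f g hf hg =>
    simp only [map_add, LinearMap.add_apply, add_mul, mul_add]
    rw [hf, hg]
    abel
  | single c r =>
    rw [single_eq_smul]
    simp only [map_smul, LinearMap.smul_apply, smul_mul_assoc, mul_smul_comm, ← smul_add]
    congr 1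
    exact ms1 d mS hS_rec c b' w v

theorem ms3 (x y : KA k A) (w v : List A) :
    mS (incl x * word w) (incl y * word v) =
      incl x * mS (word w) (incl y * word v) +
      incl y * mS (incl x * word w) (word v) +
      incl (d x y) * mS (word w) (word v) := by
  induction y using Finsupp.induction_linear with
  | zero => simp
  | add f g hf hg =>
    simp only [map_add, LinearMap.add_apply, add_mul, mul_add]
    rw [hf, hg]
    abel
  | single c r =>
    rw [single_eq_smul]
    simp only [map_smul, LinearMap.smul_apply, smul_mul_assoc, mul_smul_comm, ← smul_add]
    congr 1
    exact ms2 d mS hS_rec x c w v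

theorem ms4 (x y : KA k A) (X : KAlg k A) (v : List A) :
    mS (incl x * X) (incl y * word v) =
      incl x * mS X (incl y * word v) +
      incl y * mS (incl x * X) (word v) +
      incl (d x y) * mS X (word v) := by
  induction X using MonoidAlgebra.induction_linear with
  | zero => simp
  | add f g hf hg =>
    simp only [map_add, LinearMap.add_apply, add_mul, mul_add]
    rw [hf, hg]
    abel
  | single g r =>
    have hg : (MonoidAlgebra.single g r : KAlg k A) = r • word (FreeMonoid.toList g) := by
      rw [← word_toList, MonoidAlgebra.smul_single', mul_one]
    rw [hg]
    simp only [map_smul, LinearMap.smul_apply, smul_mul_assoc, mul_smul_comm, ← smul_add]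
    congr 1
    exact ms3 d mS hS_rec x y (FreeMonoid.toList g) v

theorem msX (x y : KA k A) (X Y : KAlg k A) :
    mS (incl x * X) (incl y * Y) =
      incl x * mS X (incl y * Y) +
      incl y * mS (incl x * X) Y +
      incl (d x y) * mS X Y := by
  induction Y using MonoidAlgebra.induction_linear with
  | zero => simp
  | add f g hf hg =>
    simp only [map_add, LinearMap.add_apply, add_mul, mul_add]
    rw [hf, hg]
    abel
  | single g r =>
    have hg : (MonoidAlgebra.single g r : KAlg k A) = r • word (FreeMonoid.toList g) := by
      rw [← word_toList, MonoidAlgebra.smul_single', mul_one]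
    rw [hg]
    simp only [map_smul, LinearMap.smul_apply, smul_mul_assoc, mul_smul_comm, ← smul_add]
    congr 1
    exact ms4 d mS hS_rec x y X (FreeMonoid.toList g)

end MS
section Main

variable {k A : Type*} [Field k] [CharZero k] [Countable A]
variable (d : KA k A →ₗ[k] KA k A →ₗ[k] KA k A)
variable (mS : KAlg k A →ₗ[k] KAlg k A →ₗ[k] KAlg k A)
variable (a b : A)

/-- `a⋄b` -/
def zD : KA k A := d (Finsupp.single a 1) (Finsupp.single b 1)
/-- `ab` -/
def Uw : KAlg k A := word [a] * word [b]

def TT (m : ℕ) : KAlg k A := Psi d (cSig k) ((incl (zD d a b))^m)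
def TX (x : KA k A) (m : ℕ) : KAlg k A :=
  Psi d (cSig k) (incl x * (incl (zD d a b))^m)
def SS (n : ℕ) : KAlg k A := Psi d (cSig k) ((Uw a b)^n)
def AX (x : KA k A) (n : ℕ) : KAlg k A := Psi d (cSig k) (incl x * (Uw a b)^n)
def BX (x : KA k A) (n : ℕ) : KAlg k A :=
  Psi d (cSig k) (incl x * (word [b] * (Uw a b)^n))
def BB (n : ℕ) : KAlg k A := AX d a b (Finsupp.single b 1) n

def RR (n : ℕ) : KAlg k A :=
  ∑ i ∈ Finset.range (n+1), mS ((Uw a b)^i) (TT d a b (n-i))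
def RT (x : KA k A) (n : ℕ) : KAlg k A :=
  ∑ i ∈ Finset.range (n+1), mS ((Uw a b)^i) (TX d a b x (n-i))
def RX (x : KA k A) (n : ℕ) : KAlg k A :=
  ∑ i ∈ Finset.range (n+1), mS ((Uw a b)^i) (incl x * TT d a b (n-i))
def QQ (n : ℕ) : KAlg k A :=
  ∑ i ∈ Finset.range (n+1), mS (word [b] * (Uw a b)^i) (TT d a b (n-i))
def QT (x : KA k A) (n : ℕ) : KAlg k A :=
  ∑ i ∈ Finset.range (n+1), mS (word [b] * (Uw a b)^i) (TX d a b x (n-i))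
def QX (x : KA k A) (n : ℕ) : KAlg k A :=
  ∑ i ∈ Finset.range (n+1), mS (word [b] * (Uw a b)^i) (incl x * TT d a b (n-i))

/-! Sig-side recursions -/

theorem Uw_succ (n : ℕ) :
    (Uw a b : KAlg k A)^(n+1) = incl (Finsupp.single a (1:k)) * (word [b] * (Uw a b)^n) := by
  rw [pow_succ', Uw, incl_single_one, mul_assoc]

theorem Uw_succ' (n : ℕ) :
    (Uw a b : KAlg k A)^(n+1) = word [a] * (word [b] * (Uw a b)^n) := by
  rw [Uw_succ, incl_single_one]

theorem TT_zero : TT d a b 0 = (1 : KAlg k A) := by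
  rw [TT, pow_zero]; exact Psi_one d _

theorem TT_succ (m : ℕ) : TT d a b (m+1) = TX d a b (zD d a b) m := by
  rw [TT, TX, pow_succ']

theorem TX_zero (x : KA k A) : TX d a b x 0 = incl x := by
  rw [TX, pow_zero, mul_one]; exact Psi_incl d x

theorem TX_succ (x : KA k A) (m : ℕ) :
    TX d a b x (m+1) = incl x * TT d a b (m+1) + TX d a b (d x (zD d a b)) m := by
  rw [TX, pow_succ', r1W, ← TX, ← TX, ← TT_succ]

theorem SS_zero : SS d a b 0 = (1 : KAlg k A) := by
  rw [SS, pow_zero]; exact Psi_one d _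

theorem SS_succ (n : ℕ) :
    SS d a b (n+1) = word [a] * BB d a b n + AX d a b (zD d a b) n := by
  rw [SS, Uw_succ]
  rw [show (word [b] : KAlg k A) * (Uw a b)^n = incl (Finsupp.single b (1:k)) * (Uw a b)^n from by
    rw [incl_single_one]]
  rw [r1W, incl_single_one]
  rfl

theorem AX_zero (x : KA k A) : AX d a b x 0 = incl x := by
  rw [AX, pow_zero, mul_one]; exact Psi_incl d x

theorem AX_succ (x : KA k A) (n : ℕ) :
    AX d a b x (n+1) = incl x * SS d a b (n+1) +
      BX d a b (d x (Finsupp.single a 1)) n := by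
  rw [AX, Uw_succ, r1W, BX, SS, Uw_succ]

theorem BX_eq (x : KA k A) (n : ℕ) :
    BX d a b x n = incl x * BB d a b n + AX d a b (d x (Finsupp.single b 1)) n := by
  rw [BX, show (word [b] : KAlg k A) * (Uw a b)^n
      = incl (Finsupp.single b (1:k)) * (Uw a b)^n from by rw [incl_single_one]]
  rw [r1W, BB, AX, AX]

theorem BB_zero : BB d a b 0 = word [b] := by
  rw [BB, AX_zero, incl_single_one]

end Main
section RSide
set_option maxHeartbeats 1000000

variable {k A : Type*} [Field k] [CharZero k] [Countable A]
variable (d : KA k A →ₗ[k] KA k A →ₗ[k] KA k A)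
variable (mS : KAlg k A →ₗ[k] KAlg k A →ₗ[k] KAlg k A)
variable (hS_one_left : ∀ x, mS (word []) x = x)
variable (hS_one_right : ∀ x, mS x (word []) = x)
variable (hS_rec : ∀ (a b : A) (w v : List A),
      mS (word (a :: w)) (word (b :: v)) =
        word [a] * mS (word w) (word (b :: v)) + word [b] * mS (word (a :: w)) (word v) +
          incl (d (Finsupp.single a 1) (Finsupp.single b 1)) * mS (word w) (word v))
variable (a b : A)

section OneLeft
include hS_one_left

theorem mS_one_left' (X : KAlg k A) : mS 1 X = X := by
  rw [← word_nil, hS_one_left]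

end OneLeft

section OneRight
include hS_one_right

theorem mS_one_right' (X : KAlg k A) : mS X 1 = X := by
  rw [← word_nil, hS_one_right]

end OneRight

section RRlem
include hS_one_left

theorem RR_zero : RR d mS a b 0 = 1 := by
  rw [RR, Finset.sum_range_one, pow_zero, Nat.sub_zero, TT_zero, mS_one_left' mS hS_one_left]

theorem RT_zero (x : KA k A) : RT d mS a b x 0 = incl x := by
  rw [RT, Finset.sum_range_one, pow_zero, Nat.sub_zero, TX_zero,
    mS_one_left' mS hS_one_left]

end RRlem

section RRsucc
include hS_one_right

theorem RR_succ (n : ℕ) :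
    RR d mS a b (n+1) = (Uw a b)^(n+1) + RT d mS a b (zD d a b) n := by
  rw [RR, Finset.sum_range_succ]
  have htop : mS ((Uw a b)^(n+1)) (TT d a b (n+1-(n+1))) = (Uw a b)^(n+1) := by
    rw [Nat.sub_self, TT_zero, mS_one_right' mS hS_one_right]
  rw [htop]
  have hc : ∀ i ∈ Finset.range (n+1), mS ((Uw a b)^i) (TT d a b (n+1-i)) =
      mS ((Uw a b)^i) (TX d a b (zD d a b) (n-i)) := by
    intro i hi
    rw [Finset.mem_range] at hi
    rw [show n+1-i = (n-i)+1 from by omega, TT_succ]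
  rw [Finset.sum_congr rfl hc, ← RT, add_comm]

theorem QQ_zero : QQ d mS a b 0 = word [b] := by
  rw [QQ, Finset.sum_range_one, pow_zero, mul_one, Nat.sub_zero, TT_zero,
    mS_one_right' mS hS_one_right]

theorem QQ_succ (n : ℕ) :
    QQ d mS a b (n+1) = word [b] * (Uw a b)^(n+1) + QT d mS a b (zD d a b) n := by
  rw [QQ, Finset.sum_range_succ]
  have htop : mS (word [b] * (Uw a b)^(n+1)) (TT d a b (n+1-(n+1)))
      = word [b] * (Uw a b)^(n+1) := by
    rw [Nat.sub_self, TT_zero, mS_one_right' mS hS_one_right]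
  rw [htop]
  have hc : ∀ i ∈ Finset.range (n+1), mS (word [b] * (Uw a b)^i) (TT d a b (n+1-i)) =
      mS (word [b] * (Uw a b)^i) (TX d a b (zD d a b) (n-i)) := by
    intro i hi
    rw [Finset.mem_range] at hi
    rw [show n+1-i = (n-i)+1 from by omega, TT_succ]
  rw [Finset.sum_congr rfl hc, ← QT, add_comm]

end RRsucc

theorem RT_succ (x : KA k A) (n : ℕ) :
    RT d mS a b x (n+1) = RX d mS a b x (n+1) + RT d mS a b (d x (zD d a b)) n := by
  rw [RT, RX, RT]
  have hc : ∀ i ∈ Finset.range (n+1), mS ((Uw a b)^i) (TX d a b x (n+1-i)) =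
      mS ((Uw a b)^i) (incl x * TT d a b (n+1-i))
        + mS ((Uw a b)^i) (TX d a b (d x (zD d a b)) (n-i)) := by
    intro i hi
    rw [Finset.mem_range] at hi
    rw [show n+1-i = (n-i)+1 from by omega, TX_succ, map_add,
      show (n-i)+1 = n+1-i from by omega]
  rw [Finset.sum_range_succ, Finset.sum_congr rfl hc, Finset.sum_add_distrib]
  have h2 : TX d a b x (n+1-(n+1)) = incl x * TT d a b (n+1-(n+1)) := by
    rw [Nat.sub_self, TX_zero, TT_zero, mul_one]
  rw [h2, Finset.sum_range_succ (f := fun i => mS ((Uw a b)^i) (incl x * TT d a b (n+1-i))) (n+1)]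
  abel

theorem QT_succ (x : KA k A) (n : ℕ) :
    QT d mS a b x (n+1) = QX d mS a b x (n+1) + QT d mS a b (d x (zD d a b)) n := by
  rw [QT, QX, QT]
  have hc : ∀ i ∈ Finset.range (n+1), mS (word [b] * (Uw a b)^i) (TX d a b x (n+1-i)) =
      mS (word [b] * (Uw a b)^i) (incl x * TT d a b (n+1-i))
        + mS (word [b] * (Uw a b)^i) (TX d a b (d x (zD d a b)) (n-i)) := by
    intro i hi
    rw [Finset.mem_range] at hi
    rw [show n+1-i = (n-i)+1 from by omega, TX_succ, map_add,
      show (n-i)+1 = n+1-i from by omega]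
  rw [Finset.sum_range_succ, Finset.sum_congr rfl hc, Finset.sum_add_distrib]
  have h2 : TX d a b x (n+1-(n+1)) = incl x * TT d a b (n+1-(n+1)) := by
    rw [Nat.sub_self, TX_zero, TT_zero, mul_one]
  rw [h2, Finset.sum_range_succ
    (f := fun i => mS (word [b] * (Uw a b)^i) (incl x * TT d a b (n+1-i))) (n+1)]
  abel

theorem QT_zero (x : KA k A) : QT d mS a b x 0 = QX d mS a b x 0 := by
  rw [QT, QX, Finset.sum_range_one, Finset.sum_range_one, Nat.sub_zero, TX_zero, TT_zero,
    mul_one]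

section RXlem
include hS_one_left hS_rec

theorem RX_succ (x : KA k A) (n : ℕ) :
    RX d mS a b x (n+1) = word [a] * QX d mS a b x n + incl x * RR d mS a b (n+1) +
      incl (d (Finsupp.single a 1) x) * QQ d mS a b n := by
  have hR : RR d mS a b (n+1) =
      (∑ i ∈ Finset.range (n+1), mS ((Uw a b)^(i+1)) (TT d a b (n-i)))
        + mS ((Uw a b)^0) (TT d a b (n+1)) := by
    rw [RR, Finset.sum_range_succ']
    simp only [Nat.succ_sub_succ, Nat.sub_zero]
  have h1 : ∀ i ∈ Finset.range (n+1), mS ((Uw a b)^(i+1)) (incl x * TT d a b (n+1-(i+1))) =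
      word [a] * mS (word [b] * (Uw a b)^i) (incl x * TT d a b (n-i)) +
      incl x * mS ((Uw a b)^(i+1)) (TT d a b (n-i)) +
      incl (d (Finsupp.single a 1) x) * mS (word [b] * (Uw a b)^i) (TT d a b (n-i)) := by
    intro i _
    rw [show n+1-(i+1) = n-i from by omega, Uw_succ, msX d mS hS_rec, incl_single_one]
  have h0 : mS ((Uw a b)^0) (incl x * TT d a b (n+1-0)) =
      incl x * mS ((Uw a b)^0) (TT d a b (n+1)) := by
    rw [Nat.sub_zero, pow_zero, mS_one_left' mS hS_one_left, mS_one_left' mS hS_one_left]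
  rw [RX, Finset.sum_range_succ', Finset.sum_congr rfl h1, h0, hR]
  rw [Finset.sum_add_distrib, Finset.sum_add_distrib, ← Finset.mul_sum, ← Finset.mul_sum,
    ← Finset.mul_sum, ← QX, ← QQ, mul_add]
  abel

theorem QX_eq (x : KA k A) (n : ℕ) :
    QX d mS a b x n = word [b] * RX d mS a b x n + incl x * QQ d mS a b n +
      incl (d (Finsupp.single b 1) x) * RR d mS a b n := by
  have h1 : ∀ i ∈ Finset.range (n+1), mS (word [b] * (Uw a b)^i) (incl x * TT d a b (n-i)) =
      word [b] * mS ((Uw a b)^i) (incl x * TT d a b (n-i)) +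
      incl x * mS (word [b] * (Uw a b)^i) (TT d a b (n-i)) +
      incl (d (Finsupp.single b 1) x) * mS ((Uw a b)^i) (TT d a b (n-i)) := by
    intro i _
    rw [show (word [b] : KAlg k A) * (Uw a b)^i
        = incl (Finsupp.single b (1:k)) * (Uw a b)^i from by rw [incl_single_one]]
    rw [msX d mS hS_rec, incl_single_one]
  rw [QX, Finset.sum_congr rfl h1]
  rw [Finset.sum_add_distrib, Finset.sum_add_distrib, ← Finset.mul_sum, ← Finset.mul_sum,
    ← Finset.mul_sum, ← RX, ← QQ, ← RR]

end RXlem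

end RSide
section BigInduction

set_option maxHeartbeats 1600000

variable {k A : Type*} [Field k] [CharZero k] [Countable A]

theorem main_pack
    (d : KA k A →ₗ[k] KA k A →ₗ[k] KA k A)
    (hd_comm : ∀ x y, d x y = d y x)
    (hd_assoc : ∀ x y z, d (d x y) z = d x (d y z))
    (mS : KAlg k A →ₗ[k] KAlg k A →ₗ[k] KAlg k A)
    (hS_one_left : ∀ x, mS (word []) x = x)
    (hS_one_right : ∀ x, mS x (word []) = x)
    (hS_rec : ∀ (a b : A) (w v : List A),
      mS (word (a :: w)) (word (b :: v)) =
        word [a] * mS (word w) (word (b :: v)) + word [b] * mS (word (a :: w)) (word v) +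
          incl (d (Finsupp.single a 1) (Finsupp.single b 1)) * mS (word w) (word v))
    (a b : A) :
    ∀ n : ℕ,
      (RR d mS a b n = SS d a b n) ∧ (QQ d mS a b n = BB d a b n) ∧
      (∀ x, QT d mS a b x n = BX d a b x n + word [b] * RT d mS a b x n) ∧
      (∀ x, RT d mS a b x n = AX d a b x n +
        (match n with
         | 0 => (0 : KAlg k A)
         | (m+1) => word [a] * QT d mS a b x m)) := by
  -- abbreviations for diamond identities
  have hzba : d (Finsupp.single b 1) (Finsupp.single a 1) = zD d a b := hd_comm _ _
  have hz1 : ∀ x, d (d x (Finsupp.single b 1)) (Finsupp.single a 1) = d x (zD d a b) := by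
    intro x; rw [hd_assoc, hzba]
  have hz2 : ∀ x, d (d x (Finsupp.single a 1)) (Finsupp.single b 1) = d x (zD d a b) := by
    intro x; rw [hd_assoc]; rfl
  have hRX0 : ∀ x : KA k A, RX d mS a b x 0 = incl x := by
    intro x
    rw [RX, Finset.sum_range_one, pow_zero, Nat.sub_zero, TT_zero, mul_one,
      mS_one_left' mS hS_one_left]
  have hBB : ∀ m : ℕ, BB d a b (m+1) = word [b] * SS d a b (m+1) + BX d a b (zD d a b) m := by
    intro m
    rw [show BB d a b (m+1) = AX d a b (Finsupp.single b 1) (m+1) from rfl, AX_succ,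
      incl_single_one, hzba]
  intro n
  induction n using Nat.strong_induction_on with
  | _ n IH =>
    match n with
    | 0 =>
      refine ⟨?_, ?_, ?_, ?_⟩
      · rw [RR_zero d mS hS_one_left, SS_zero]
      · rw [QQ_zero d mS hS_one_right, BB_zero]
      · intro x
        rw [QT_zero, QX_eq d mS hS_one_left hS_rec, RT_zero d mS hS_one_left,
          RR_zero d mS hS_one_left, QQ_zero d mS hS_one_right, hRX0,
          BX_eq, BB_zero, AX_zero, mul_one, hd_comm (Finsupp.single b 1) x]
        abel
      · intro x
        rw [RT_zero d mS hS_one_left, AX_zero, add_zero]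
    | (m+1) =>
      obtain ⟨ih1, ih2, ih3, ih4⟩ := IH m (by omega)
      -- (1)
      have e1 : RR d mS a b (m+1) = SS d a b (m+1) := by
        match m with
        | 0 =>
          rw [RR_succ d mS hS_one_right, RT_zero d mS hS_one_left, SS_succ, BB_zero,
            AX_zero, pow_one, Uw]
        | (j+1) =>
          obtain ⟨ihj1, ihj2, ihj3, ihj4⟩ := IH j (by omega)
          have h1 : RT d mS a b (zD d a b) (j+1) =
              AX d a b (zD d a b) (j+1) + word [a] * QT d mS a b (zD d a b) j :=
            ih4 (zD d a b)
          have h2 : QT d mS a b (zD d a b) j =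
              BX d a b (zD d a b) j + word [b] * RT d mS a b (zD d a b) j := ihj3 _
          have h3 : RT d mS a b (zD d a b) j =
              RR d mS a b (j+1) - (Uw a b)^(j+1) := by
            rw [RR_succ d mS hS_one_right a b j]; abel
          rw [RR_succ d mS hS_one_right, h1, h2, h3, SS_succ d a b (j+1), hBB j, ih1]
          simp only [mul_add, mul_sub]
          rw [show (word [a] : KAlg k A) * (word [b] * (Uw a b)^(j+1)) = (Uw a b)^(j+2) from
            (Uw_succ' a b (j+1)).symm]
          abel
      -- (2)
      have e2 : QQ d mS a b (m+1) = BB d a b (m+1) := by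
        have h3 : RT d mS a b (zD d a b) m = RR d mS a b (m+1) - (Uw a b)^(m+1) := by
          rw [RR_succ d mS hS_one_right a b m]; abel
        rw [QQ_succ d mS hS_one_right, ih3, h3, hBB m, e1]
        simp only [mul_add, mul_sub]
        abel
      -- (3)
      have e3 : ∀ x, QT d mS a b x (m+1) =
          BX d a b x (m+1) + word [b] * RT d mS a b x (m+1) := by
        intro x
        rw [QT_succ, ih3, QX_eq d mS hS_one_left hS_rec, RT_succ, BX_eq (n := m+1),
          AX_succ, e2, hz1, hd_comm (Finsupp.single b 1) x, e1]
        simp only [mul_add]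
        abel
      -- (4)
      have e4 : ∀ x, RT d mS a b x (m+1) = AX d a b x (m+1) +
          word [a] * QT d mS a b x m := by
        intro x
        rw [RT_succ, ih4, RX_succ d mS hS_one_left hS_rec, AX_succ, BX_eq, hz2,
          hd_comm (Finsupp.single a 1) x, e1, ih2]
        cases m with
        | zero =>
          rw [QT_zero]
          abel
        | succ j =>
          rw [QT_succ]
          simp only [mul_add]
          abel
      exact ⟨e1, e2, e3, e4⟩

end BigInduction
section Final

variable {k A : Type*} [Field k] [CharZero k] [Countable A]

theorem coeff_pow_ifone (X : KAlg k A) (i n : ℕ) :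
    PowerSeries.coeff (R := KAlg k A) n
      ((PowerSeries.mk fun m => if m = 1 then X else (0:KAlg k A))^i) =
    if n = i then X^i else 0 := by
  induction i generalizing n with
  | zero =>
    rw [pow_zero, PowerSeries.coeff_one]
    by_cases h : n = 0 <;> simp [h]
  | succ i ih =>
    rw [pow_succ', PowerSeries.coeff_mul]
    by_cases hn : n = i + 1
    · subst hn
      rw [Finset.sum_eq_single ((1 : ℕ), i)]
      · rw [PowerSeries.coeff_mk, ih]
        simp [pow_succ']
      · rintro ⟨p, q⟩ hmem hne
        rw [Finset.HasAntidiagonal.mem_antidiagonal] at hmem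
        rw [PowerSeries.coeff_mk, ih]
        by_cases hp : p = 1
        · have hq : q = i := by omega
          exact absurd (by rw [hp, hq]) hne
        · simp [hp]
      · intro h
        exact absurd (Finset.HasAntidiagonal.mem_antidiagonal.mpr (by omega)) h
    · rw [if_neg hn]
      apply Finset.sum_eq_zero
      rintro ⟨p, q⟩ hmem
      rw [Finset.HasAntidiagonal.mem_antidiagonal] at hmem
      rw [PowerSeries.coeff_mk, ih]
      by_cases hp : p = 1
      · have hq : ¬ q = i := by omega
        simp [hp, hq]
      · simp [hp]

theorem coeff_geom (X : KAlg k A) (n : ℕ) :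
    PowerSeries.coeff (R := KAlg k A) n
      (geomS (PowerSeries.mk fun m => if m = 1 then X else (0:KAlg k A))) = X^n := by
  rw [geomS, PowerSeries.coeff_mk]
  rw [Finset.sum_congr rfl fun i _ => coeff_pow_ifone X i n]
  rw [Finset.sum_ite_eq]
  simp

end Final

/-- Theorem 5.6 of Hoffman–Ihara: for letters `a, b ∈ A`,
`Σ(1/(1-λab)) = 1/(1-λab) * Σ(1/(1-λ(a⋄b)))`, where `ab` is the two-letter word,
`a⋄b ∈ kA`, and `Σ = Ψ_{t/(1-t)}` is applied coefficientwise. -/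
theorem Sigma_double_generating_function
    {k A : Type*} [Field k] [CharZero k] [Countable A]
    (d : KA k A →ₗ[k] KA k A →ₗ[k] KA k A)
    (hd_comm : ∀ x y, d x y = d y x)
    (hd_assoc : ∀ x y z, d (d x y) z = d x (d y z))
    (mS : KAlg k A →ₗ[k] KAlg k A →ₗ[k] KAlg k A)
    (hS_one_left : ∀ x, mS (word []) x = x)
    (hS_one_right : ∀ x, mS x (word []) = x)
    (hS_rec : ∀ (a b : A) (w v : List A),
      mS (word (a :: w)) (word (b :: v)) =
        word [a] * mS (word w) (word (b :: v)) + word [b] * mS (word (a :: w)) (word v) +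
          incl (d (Finsupp.single a 1) (Finsupp.single b 1)) * mS (word w) (word v))
    (a b : A) :
    mapS (Psi d (cSig k))
        (geomS (PowerSeries.mk fun n => if n = 1 then word [a, b] else (0 : KAlg k A))) =
      mul2S mS
        (geomS (PowerSeries.mk fun n => if n = 1 then word [a, b] else (0 : KAlg k A)))
        (mapS (Psi d (cSig k))
          (geomS (PowerSeries.mk fun n =>
            if n = 1 then incl (d (Finsupp.single a 1) (Finsupp.single b 1))
            else (0 : KAlg k A)))) := by
  apply PowerSeries.ext
  intro n
  simp only [mapS, mul2S, PowerSeries.coeff_mk]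
  rw [coeff_geom]
  have hG : ∀ m, Psi d (cSig k) (PowerSeries.coeff (R := KAlg k A) m
      (geomS (PowerSeries.mk fun m =>
        if m = 1 then incl (d (Finsupp.single a 1) (Finsupp.single b 1))
        else (0 : KAlg k A)))) = TT d a b m := by
    intro m
    rw [coeff_geom]
    rfl
  rw [Finset.sum_congr rfl fun i _ => by rw [coeff_geom, hG]]
  rw [show (word [a, b] : KAlg k A) = Uw a b from by rw [Uw, word_mul]; rfl]
  exact ((main_pack d hd_comm hd_assoc mS hS_one_left hS_one_right hS_rec a b n).1).symm

end QuasiShuffle
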